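/- arXiv:0905.3346 — 2 statements merged into one kernel-verified Lean document; each statement's English description precedes it below -/
import Mathlib

section
/- The diophantine equation x⁴ + 4x²y² − 3y⁴ = z² has no solution in positive integers x, y, z. -/
/-!
Put `A = x² + 2y²`, so that `A² - z² = 7y⁴`. For a primitive solution `y = 2w` is even and
`A`, `z` are odd and coprime, so `(A - z)/2` and `(A + z)/2` are coprime with product `28w⁴`;
congruences mod 8 force them to be `28s⁴` and `t⁴` with `w = st` and `s` even. Writing `s = 2r`
and `u = t² - 16r²` gives `x² - u² = 192r⁴`, and the same argument makes `(x - u)/2` and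
`(x + u)/2` equal to `48a⁴` and `b⁴` with `r = ab`. Then `(b, 2a, t)` is again a solution, and
`2a < y`: infinite descent.
-/

theorem Nat.exists_eq_mul_pow_of_coprime_of_mul_eq {m n c w k : ℕ} (hk : k ≠ 0) (hc : c ≠ 0)
    (hmn : m.Coprime n) (h : m * n = c * w ^ k) :
    ∃ d e s t, d * e = c ∧ s * t = w ∧ m = d * s ^ k ∧ n = e * t ^ k := by
  have hgcd : m.gcd c * n.gcd c = c := by
    rw [Nat.gcd_comm m, Nat.gcd_comm n, ← Nat.Coprime.gcd_mul c hmn, h,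
      Nat.gcd_mul_right_right]
  obtain ⟨d, e, hde, ⟨m', rfl⟩, ⟨n', rfl⟩⟩ : ∃ d e, d * e = c ∧ d ∣ m ∧ e ∣ n :=
    ⟨m.gcd c, n.gcd c, hgcd, Nat.gcd_dvd_left m c, Nat.gcd_dvd_left n c⟩
  have hmn' : m' * n' = w ^ k := by
    refine Nat.eq_of_mul_eq_mul_left (Nat.pos_of_ne_zero hc) ?_
    rw [← h, ← hde]
    ring
  have hcop : m'.Coprime n' := hmn.coprime_mul_left.coprime_mul_left_right
  obtain ⟨s, rfl⟩ := exists_eq_pow_of_mul_eq_pow (Nat.isUnit_iff.mpr hcop) hmn'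
  obtain ⟨t, rfl⟩ := exists_eq_pow_of_mul_eq_pow (Nat.isUnit_iff.mpr hcop.symm)
    ((mul_comm _ _).trans hmn')
  have hst : s * t = w := Nat.pow_left_injective hk (by simpa only [mul_pow] using hmn')
  exact ⟨d, e, s, t, hde, hst, rfl, rfl⟩

theorem Int.exists_eq_mul_pow_of_isCoprime_of_mul_eq {m n c w : ℤ} {k : ℕ} (hk : k ≠ 0)
    (hm : 0 < m) (hn : 0 < n) (hc : 0 < c) (hw : 0 ≤ w) (hmn : IsCoprime m n)
    (h : m * n = c * w ^ k) :
    ∃ d e s t : ℤ, 0 < d ∧ 0 < e ∧ 0 < s ∧ 0 < t ∧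
      d * e = c ∧ s * t = w ∧ m = d * s ^ k ∧ n = e * t ^ k := by
  lift m to ℕ using hm.le
  lift n to ℕ using hn.le
  lift c to ℕ using hc.le
  lift w to ℕ using hw
  have h' : m * n = c * w ^ k := by exact_mod_cast h
  obtain ⟨d, e, s, t, hde, hst, rfl, rfl⟩ := Nat.exists_eq_mul_pow_of_coprime_of_mul_eq hk
    (by omega) (Nat.isCoprime_iff_coprime.mp hmn) h'
  simp only [Nat.cast_pos, CanonicallyOrderedAdd.mul_pos, pow_pos_iff hk] at hm hn
  exact ⟨d, e, s, t, by exact_mod_cast hm.1, by exact_mod_cast hn.1, by exact_mod_cast hm.2,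
    by exact_mod_cast hn.2, by exact_mod_cast hde, by exact_mod_cast hst, by push_cast; ring,
    by push_cast; ring⟩

theorem Int.isCoprime_of_sq_sub_sq_eq_mul {a b k c : ℤ} (hk : Squarefree k) (hbc : IsCoprime b c)
    (h : a ^ 2 - b ^ 2 = k * c) : IsCoprime a b := by
  rw [Int.isCoprime_iff_gcd_eq_one]
  have hga := Int.gcd_dvd_left a b
  have hgb := Int.gcd_dvd_right a b
  set g : ℤ := (a.gcd b : ℤ)
  have hgc : IsCoprime g c := hbc.of_isCoprime_of_dvd_left hgb
  have hgk : g * g ∣ k := by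
    refine (hgc.mul_left hgc).dvd_of_dvd_mul_right (h ▸ dvd_sub ?_ ?_) <;>
      rw [sq] <;> exact mul_dvd_mul ‹_› ‹_›
  simpa [g, Int.isUnit_iff] using hk g hgk

theorem Int.exists_eq_mul_pow_of_sq_sub_sq {a b c w : ℤ} {k : ℕ} (hk : k ≠ 0) (ha : Odd a)
    (hb : Odd b) (hab : IsCoprime a b) (ha0 : 0 < a) (hc : 0 < c) (hw : 0 < w)
    (h : a ^ 2 - b ^ 2 = 4 * c * w ^ k) :
    ∃ d e s t : ℤ, 0 < d ∧ 0 < e ∧ 0 < s ∧ 0 < t ∧ IsCoprime s t ∧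
      d * e = c ∧ s * t = w ∧ a = d * s ^ k + e * t ^ k ∧ b = e * t ^ k - d * s ^ k := by
  obtain ⟨m, n, rfl, rfl⟩ : ∃ m n, a = m + n ∧ b = n - m := by
    obtain ⟨i, rfl⟩ := ha
    obtain ⟨j, rfl⟩ := hb
    exact ⟨i - j, i + j + 1, by ring, by ring⟩
  have hmn : IsCoprime m n := by
    obtain ⟨u, v, huv⟩ := hab
    exact ⟨u - v, u + v, by linear_combination huv⟩
  have hprod : m * n = c * w ^ k :=
    mul_left_cancel₀ four_ne_zero (by linear_combination h)
  obtain ⟨hm, hn⟩ : 0 < m ∧ 0 < n := by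
    rcases pos_and_pos_or_neg_and_neg_of_mul_pos (hprod ▸ by positivity : 0 < m * n) with h' | h'
    · exact h'
    · linarith
  obtain ⟨d, e, s, t, hd, he, hs, ht, hde, hst, rfl, rfl⟩ :=
    Int.exists_eq_mul_pow_of_isCoprime_of_mul_eq hk hm hn hc hw.le hmn hprod
  have hst' : IsCoprime s t :=
    (IsCoprime.pow_left_iff (Nat.pos_of_ne_zero hk)).mp
      ((IsCoprime.pow_right_iff (Nat.pos_of_ne_zero hk)).mp
        hmn.of_mul_left_right.of_mul_right_right)
  exact ⟨d, e, s, t, hd, he, hs, ht, hst', hde, hst, by ring, by ring⟩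

theorem Int.sq_emod_eight_eq_one_of_odd {x : ℤ} (hx : Odd x) : x ^ 2 % 8 = 1 := by
  obtain ⟨k, rfl⟩ := hx
  obtain ⟨j, hj⟩ := Int.even_mul_succ_self k
  rw [show (2 * k + 1) ^ 2 = 8 * j + 1 by linear_combination 4 * hj]
  omega

theorem Int.emod_sixteen_of_eq_mul_pow_four {m d s : ℤ} (h : m = d * s ^ 4) :
    s % 2 = 0 ∧ m % 16 = 0 ∨ s % 2 = 1 ∧ m % 16 = d % 16 := by
  rcases Int.even_or_odd s with ⟨k, rfl⟩ | hs
  · left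
    rw [h, show d * (k + k) ^ 4 = 16 * (d * k ^ 4) by ring]
    omega
  · right
    obtain ⟨j, hj⟩ : 8 ∣ s ^ 2 - 1 := by have := Int.sq_emod_eight_eq_one_of_odd hs; omega
    rw [h, show d * s ^ 4 = d + 16 * (d * (4 * j ^ 2 + j)) by
      linear_combination (d * (s ^ 2 + 1 + 8 * j)) * hj]
    have := Int.odd_iff.mp hs
    omega

theorem factor_pair_28_of_add_emod_eight {m n d e s t : ℤ} (hd : 0 < d) (hde : d * e = 28)
    (hm : m = d * s ^ 4) (hn : n = e * t ^ 4) (h : (m + n) % 8 = 1) :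
    d = 28 ∧ e = 1 ∧ Even s ∨ d = 1 ∧ e = 28 ∧ Even t := by
  have hs := Int.emod_sixteen_of_eq_mul_pow_four hm
  have ht := Int.emod_sixteen_of_eq_mul_pow_four hn
  have hd28 : d ≤ 28 := Int.le_of_dvd (by norm_num) ⟨e, hde.symm⟩
  simp only [Int.even_iff]
  interval_cases d <;> omega

theorem factor_pair_48_of_sub_emod_eight {p q d e a b : ℤ} (hd : 0 < d) (hde : d * e = 48)
    (hp : p = d * a ^ 4) (hq : q = e * b ^ 4) (h : (q - p) % 8 = 1) :
    d = 48 ∧ e = 1 := by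
  have ha := Int.emod_sixteen_of_eq_mul_pow_four hp
  have hb := Int.emod_sixteen_of_eq_mul_pow_four hq
  have hd48 : d ≤ 48 := Int.le_of_dvd (by norm_num) ⟨e, hde.symm⟩
  interval_cases d <;> omega

def IsPosSolution (x y z : ℤ) : Prop :=
  0 < x ∧ 0 < y ∧ 0 < z ∧ x ^ 4 + 4 * x ^ 2 * y ^ 2 - 3 * y ^ 4 = z ^ 2

theorem even_of_quartic_eq_sq {x y z : ℤ} (h : x ^ 4 + 4 * x ^ 2 * y ^ 2 - 3 * y ^ 4 = z ^ 2) :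
    Even y := by
  by_contra hy
  obtain ⟨k, rfl⟩ := Int.not_even_iff_odd.mp hy
  have key : ∀ x k z : ZMod 8,
      x ^ 4 + 4 * x ^ 2 * (2 * k + 1) ^ 2 - 3 * (2 * k + 1) ^ 4 ≠ z ^ 2 := by
    decide
  exact key x k z (by exact_mod_cast congrArg (Int.cast : ℤ → ZMod 8) h)

theorem exists_sq_add_eq_of_quartic_eq_sq {x w z : ℤ} (hx : Odd x) (hxw : IsCoprime x (2 * w))
    (hw : 0 < w)
    (h : x ^ 4 + 4 * x ^ 2 * (2 * w) ^ 2 - 3 * (2 * w) ^ 4 = z ^ 2) :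
    ∃ s t : ℤ, 0 < s ∧ 0 < t ∧ IsCoprime s t ∧ Even s ∧ s * t = w ∧
      x ^ 2 + 8 * (s * t) ^ 2 = 28 * s ^ 4 + t ^ 4 := by
  have hz : Odd z := by
    have : Odd (z ^ 2) := by
      rw [← h, show x ^ 4 + 4 * x ^ 2 * (2 * w) ^ 2 - 3 * (2 * w) ^ 4 =
        x ^ 4 + 2 * (8 * x ^ 2 * w ^ 2 - 24 * w ^ 4) by ring]
      exact hx.pow.add_even (even_two_mul _)
    exact (Int.odd_pow.mp this).resolve_right two_ne_zero
  have hzw : IsCoprime z ((2 * w) ^ 4) := by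
    have : IsCoprime (z ^ 2) (2 * w) := by
      rw [← h, show x ^ 4 + 4 * x ^ 2 * (2 * w) ^ 2 - 3 * (2 * w) ^ 4 =
        x ^ 4 + 2 * w * (8 * x ^ 2 * w - 24 * w ^ 3) by ring]
      exact IsCoprime.add_mul_left_left hxw.pow_left _
    exact ((IsCoprime.pow_left_iff two_pos).mp this).pow_right
  have hAodd : Odd (x ^ 2 + 8 * w ^ 2) := hx.pow.add_even ⟨4 * w ^ 2, by ring⟩
  have hA8 : (x ^ 2 + 8 * w ^ 2) % 8 = 1 := by
    have := Int.sq_emod_eight_eq_one_of_odd hx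
    omega
  have hAz : IsCoprime (x ^ 2 + 8 * w ^ 2) z :=
    Int.isCoprime_of_sq_sub_sq_eq_mul (k := 7)
      (Int.prime_iff_natAbs_prime.mpr (by norm_num)).squarefree hzw (by linear_combination h)
  obtain ⟨d, e, s, t, hd, -, hs, ht, hst, hde, rfl, hAde, -⟩ :=
    Int.exists_eq_mul_pow_of_sq_sub_sq four_ne_zero hAodd hz hAz (by positivity) (c := 28)
      (by norm_num) hw (by linear_combination h)
  rcases factor_pair_28_of_add_emod_eight hd hde rfl rfl (hAde ▸ hA8) with
    ⟨rfl, rfl, hse⟩ | ⟨rfl, rfl, hte⟩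
  · exact ⟨s, t, hs, ht, hst, hse, rfl, by linear_combination hAde⟩
  · exact ⟨t, s, ht, hs, hst.symm, hte, mul_comm t s, by linear_combination hAde⟩

theorem exists_quartic_eq_sq_of_sq_add_eq {x s t : ℤ} (hx : 0 < x) (hxodd : Odd x) (hs : 0 < s)
    (hst : IsCoprime s t) (hseven : Even s) (h : x ^ 2 + 8 * (s * t) ^ 2 = 28 * s ^ 4 + t ^ 4) :
    ∃ a b : ℤ, 0 < a ∧ 0 < b ∧ 2 * a * b = s ∧
      b ^ 4 + 4 * b ^ 2 * (2 * a) ^ 2 - 3 * (2 * a) ^ 4 = t ^ 2 := by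
  obtain ⟨r, rfl⟩ := hseven.two_dvd
  have htodd : Odd t := Int.isCoprime_two_left.mp hst.of_mul_left_left
  have huodd : Odd (t ^ 2 - 16 * r ^ 2) := htodd.pow.sub_even ⟨8 * r ^ 2, by ring⟩
  have hu8 : (t ^ 2 - 16 * r ^ 2) % 8 = 1 := by
    have := Int.sq_emod_eight_eq_one_of_odd htodd
    omega
  have hur : IsCoprime (t ^ 2 - 16 * r ^ 2) (64 * r ^ 4) := by
    have h2 := (Int.isCoprime_two_right.mpr huodd).pow_right (n := 6)
    have hr : IsCoprime (t ^ 2 - 16 * r ^ 2) r := by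
      rw [show t ^ 2 - 16 * r ^ 2 = t ^ 2 + r * (-16 * r) by ring]
      exact hst.of_mul_left_right.symm.pow_left.add_mul_left_left _
    simpa using h2.mul_right hr.pow_right
  have hxu : IsCoprime x (t ^ 2 - 16 * r ^ 2) :=
    Int.isCoprime_of_sq_sub_sq_eq_mul Int.prime_three.squarefree hur (by linear_combination h)
  obtain ⟨d, e, a, b, hd, -, ha, hb, -, hde, rfl, -, hude⟩ :=
    Int.exists_eq_mul_pow_of_sq_sub_sq four_ne_zero hxodd huodd hxu hx (c := 48) (w := r)
      (by norm_num) (by omega) (by linear_combination h)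
  obtain ⟨rfl, rfl⟩ := factor_pair_48_of_sub_emod_eight hd hde rfl rfl (hude ▸ hu8)
  exact ⟨a, b, ha, hb, by ring, by linear_combination -hude⟩

theorem IsPosSolution.exists_isCoprime_le {x y z : ℤ} (h : IsPosSolution x y z) :
    ∃ x' y' z', IsPosSolution x' y' z' ∧ IsCoprime x' y' ∧ y' ≤ y := by
  obtain ⟨hx, hy, hz, h⟩ := h
  obtain ⟨g, x', y', hg, hxy', rfl, rfl⟩ :=
    Int.exists_gcd_one' (Int.gcd_pos_of_ne_zero_left y hx.ne')
  have hg' : (0 : ℤ) < g := by exact_mod_cast hg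
  obtain ⟨z', rfl⟩ : (g : ℤ) ^ 2 ∣ z := by
    rw [← Int.pow_dvd_pow_iff two_ne_zero, ← h]
    exact ⟨x' ^ 4 + 4 * x' ^ 2 * y' ^ 2 - 3 * y' ^ 4, by ring⟩
  have hy' : 0 < y' := pos_of_mul_pos_left hy hg'.le
  refine ⟨x', y', z', ⟨pos_of_mul_pos_left hx hg'.le, hy',
    pos_of_mul_pos_right hz (by positivity),
    mul_left_cancel₀ (pow_ne_zero 4 hg'.ne') (by linear_combination h)⟩,
    Int.isCoprime_iff_gcd_eq_one.mpr hxy', le_mul_of_one_le_right hy'.le (by omega)⟩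

theorem IsPosSolution.exists_lt_of_isCoprime {x y z : ℤ} (h : IsPosSolution x y z)
    (hxy : IsCoprime x y) : ∃ x' y' z', IsPosSolution x' y' z' ∧ y' < y := by
  obtain ⟨hx, hy, -, h⟩ := h
  obtain ⟨w, rfl⟩ := (even_of_quartic_eq_sq h).two_dvd
  have hxodd : Odd x := Int.isCoprime_two_right.mp hxy.of_mul_right_left
  obtain ⟨s, t, hs, ht, hst, hseven, rfl, hxst⟩ :=
    exists_sq_add_eq_of_quartic_eq_sq hxodd hxy (by omega) h
  obtain ⟨a, b, ha, hb, rfl, hab⟩ :=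
    exists_quartic_eq_sq_of_sq_add_eq hx hxodd hs hst hseven hxst
  refine ⟨b, 2 * a, t, ⟨hb, by positivity, ht, hab⟩, ?_⟩
  nlinarith [mul_pos (mul_pos ha hb) ht, mul_pos ha hb]

theorem not_isPosSolution (x y z : ℤ) : ¬ IsPosSolution x y z := by
  induction hn : y.toNat using Nat.strong_induction_on generalizing x y z with
  | _ n ih =>
    intro h
    obtain ⟨x₁, y₁, z₁, h₁, hcop, hle⟩ := h.exists_isCoprime_le
    obtain ⟨x₂, y₂, z₂, h₂, hlt⟩ := h₁.exists_lt_of_isCoprime hcop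
    exact ih y₂.toNat (by have := h₂.2.1; omega) x₂ y₂ z₂ rfl h₂

theorem stmt7 :
    ¬ ∃ x y z : ℤ, 0 < x ∧ 0 < y ∧ 0 < z ∧
      x ^ 4 + 4 * x ^ 2 * y ^ 2 - 3 * y ^ 4 = z ^ 2 := by
  rintro ⟨x, y, z, h⟩
  exact not_isPosSolution x y z h
end

section
/- The diophantine equation x⁴ + 16x²y² − 3y⁴ = z² has no solution in positive integers x, y, z. -/
/-!
With `C = x² + 8y²` the equation reads `C² - z² = 67 y⁴`. Divide out `gcd(x, y)` and write
`y = 2^k t` with `t` odd. For `k = 0` the equation is already impossible modulo 16. For `k ≥ 1`,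
`x` and `C` are odd and `(C - z)/2`, `(C + z)/2` are coprime with product `67 · 2^(4k-2) t⁴`,
so they are `2^(4k-2) e` and `o` with `{e, o} = {67 u⁴, v⁴}` or `{u⁴, 67 v⁴}`, `t = uv`.
Modulo 16 this is impossible for `k = 1`, and for `k ≥ 2` it forces
`C = 2^(4k-2) · 67 u⁴ + v⁴`. Completing the square gives `x² = (v² - 8q)² + 3q²` with
`q = 2^(2k-1) u²`; factoring this in the same way, with the prime `3`, and reducing modulo 16
once more produces the smaller solution `(v', 2^(k-1) u', v)` where `u = u'v'`. So `k` descends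
to `1`, a contradiction.
-/

open Nat

lemma sq_mod_sixteen (n : ℕ) :
    n ^ 2 % 16 = 0 ∨ n ^ 2 % 16 = 1 ∨ n ^ 2 % 16 = 4 ∨ n ^ 2 % 16 = 9 := by
  have key : ∀ m < 16,
      m ^ 2 % 16 = 0 ∨ m ^ 2 % 16 = 1 ∨ m ^ 2 % 16 = 4 ∨ m ^ 2 % 16 = 9 := by
    decide
  rw [Nat.pow_mod]
  exact key _ (Nat.mod_lt _ (by norm_num))

lemma pow_four_mod_sixteen (n : ℕ) : n ^ 4 % 16 = 0 ∨ n ^ 4 % 16 = 1 := by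
  have key : ∀ m < 16, m ^ 4 % 16 = 0 ∨ m ^ 4 % 16 = 1 := by decide
  rw [Nat.pow_mod]
  exact key _ (Nat.mod_lt _ (by norm_num))

lemma pow_four_mod_sixteen_of_odd {n : ℕ} (hn : Odd n) : n ^ 4 % 16 = 1 := by
  have : n ^ 4 % 2 = 1 := Nat.odd_iff.mp hn.pow
  rcases pow_four_mod_sixteen n with h | h <;> omega

lemma coprime_of_sq_add_prime_mul_eq_sq {C r p n : ℕ} (hp : p.Prime) (hCn : Coprime C n)
    (h : r ^ 2 + p * n = C ^ 2) : Coprime C r := by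
  refine Nat.coprime_of_dvd fun q hq hqC hqr => ?_
  have hqn : Coprime (q ^ 2) n := (hCn.coprime_dvd_left hqC).pow_left 2
  have hq2 : q ^ 2 ∣ p * n := by
    have := Nat.dvd_sub (pow_dvd_pow_of_dvd hqC 2) (pow_dvd_pow_of_dvd hqr 2)
    rwa [show C ^ 2 - r ^ 2 = p * n by omega] at this
  have hqq : q * q ∣ p := by simpa [sq] using hqn.dvd_of_dvd_mul_right hq2
  exact hq.not_isUnit (hp.prime.squarefree q hqq)

lemma exists_pow_four_of_coprime_mul_eq_prime_mul {a b p t : ℕ} (hp : p.Prime)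
    (hab : Coprime a b) (h : a * b = p * t ^ 4) :
    ∃ u v, t = u * v ∧ Coprime u v ∧
      (a = p * u ^ 4 ∧ b = v ^ 4 ∨ a = u ^ 4 ∧ b = p * v ^ 4) := by
  wlog hpa : p ∣ a generalizing a b
  · have hpb : p ∣ b := (hp.dvd_mul.mp ⟨_, h⟩).resolve_left hpa
    obtain ⟨u, v, rfl, huv, hcases⟩ := this hab.symm (by rw [mul_comm, h]) hpb
    exact ⟨v, u, mul_comm u v, huv.symm, hcases.symm.imp And.symm And.symm⟩
  obtain ⟨a, rfl⟩ := hpa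
  have hab4 : a * b = t ^ 4 := by
    rw [mul_assoc] at h
    exact Nat.eq_of_mul_eq_mul_left hp.pos h
  have hgcd : IsUnit (GCDMonoid.gcd a b) := Nat.isUnit_iff.mpr (Coprime.coprime_mul_left hab)
  have hgcd' : IsUnit (GCDMonoid.gcd b a) :=
    Nat.isUnit_iff.mpr (Coprime.coprime_mul_left hab).symm
  obtain ⟨u, rfl⟩ := exists_eq_pow_of_mul_eq_pow hgcd hab4
  obtain ⟨v, rfl⟩ := exists_eq_pow_of_mul_eq_pow hgcd' (by rw [mul_comm, hab4])
  refine ⟨u, v, Nat.pow_left_injective (n := 4) (by norm_num) ?_, ?_, Or.inl ⟨rfl, rfl⟩⟩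
  · simp only [mul_pow, hab4]
  exact (Nat.coprime_pow_left_iff (by norm_num) _ _).mp
    ((Nat.coprime_pow_right_iff (by norm_num) _ _).mp (Coprime.coprime_mul_left hab))

lemma exists_coprime_mul_eq_of_sq_add_four_mul_eq_sq {C r M : ℕ} (hC : Odd C)
    (hCr : Coprime C r) (h : r ^ 2 + 4 * M = C ^ 2) :
    ∃ g k, Coprime g k ∧ g * k = M ∧ C = g + k ∧ k = g + r := by
  have hr : Odd r := by
    have : Odd (r ^ 2 + 4 * M) := h ▸ hC.pow
    exact (Nat.odd_pow_iff two_ne_zero).mp (by simpa [Nat.odd_add, parity_simps] using this)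
  have hrC : r ≤ C := (Nat.pow_le_pow_iff_left two_ne_zero).mp (by omega)
  obtain ⟨g, rfl⟩ : ∃ g, C = 2 * g + r := by
    obtain ⟨c, rfl⟩ := hC
    obtain ⟨s, rfl⟩ := hr
    exact ⟨c - s, by omega⟩
  have hgr : Coprime g r := (Nat.coprime_add_self_left.mp hCr).coprime_dvd_left (dvd_mul_left g 2)
  exact ⟨g, g + r, Nat.coprime_self_add_right.mpr hgr, by nlinarith, by ring, rfl⟩

lemma exists_pow_four_of_coprime_mul_eq_two_pow_mul {g k p F t : ℕ} (hp : p.Prime)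
    (hgk : Coprime g k) (hk : Odd k) (h : g * k = 2 ^ F * (p * t ^ 4)) :
    ∃ u v e, g = 2 ^ F * e ∧ t = u * v ∧ Coprime u v ∧
      (e = p * u ^ 4 ∧ k = v ^ 4 ∨ e = u ^ 4 ∧ k = p * v ^ 4) := by
  have h2k : Coprime (2 ^ F) k := (Nat.coprime_two_left.mpr hk).pow_left F
  obtain ⟨e, rfl⟩ : 2 ^ F ∣ g := h2k.dvd_of_dvd_mul_right ⟨_, h⟩
  have hek : e * k = p * t ^ 4 := by
    rw [mul_assoc] at h
    exact Nat.eq_of_mul_eq_mul_left (by positivity) h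
  obtain ⟨u, v, rfl, huv, hcases⟩ :=
    exists_pow_four_of_coprime_mul_eq_prime_mul hp (Coprime.coprime_mul_left hgk) hek
  exact ⟨u, v, e, rfl, rfl, huv, hcases⟩

lemma exists_pow_four_of_sq_add_four_mul_two_pow_mul_eq_sq {C r p F t : ℕ} (hp : p.Prime)
    (hC : Odd C) (hCt : Coprime C t) (h : r ^ 2 + 4 * (2 ^ F * (p * t ^ 4)) = C ^ 2) :
    ∃ u v e o, t = u * v ∧ Coprime u v ∧
      (e = p * u ^ 4 ∧ o = v ^ 4 ∨ e = u ^ 4 ∧ o = p * v ^ 4) ∧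
      C = 2 ^ F * e + o ∧ (r + 2 ^ F * e = o ∨ r + o = 2 ^ F * e) := by
  have hCr : Coprime C r := by
    refine coprime_of_sq_add_prime_mul_eq_sq hp ?_ (n := 2 ^ (F + 2) * t ^ 4) (by rw [← h]; ring)
    exact ((Nat.coprime_two_right.mpr hC).pow_right _).mul_right (hCt.pow_right 4)
  obtain ⟨g, k, hgk, hM, rfl, rfl⟩ := exists_coprime_mul_eq_of_sq_add_four_mul_eq_sq hC hCr h
  rcases Nat.even_or_odd (g + r) with hk | hk
  · have hg : Odd g := Nat.coprime_two_left.mp (hgk.symm.coprime_dvd_left hk.two_dvd)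
    obtain ⟨u, v, e, he, rfl, huv, hcases⟩ :=
      exists_pow_four_of_coprime_mul_eq_two_pow_mul hp hgk.symm hg (by rw [mul_comm, hM])
    exact ⟨u, v, e, g, rfl, huv, hcases, by omega, Or.inr (by omega)⟩
  · obtain ⟨u, v, e, he, rfl, huv, hcases⟩ :=
      exists_pow_four_of_coprime_mul_eq_two_pow_mul hp hgk hk hM
    exact ⟨u, v, e, g + r, rfl, huv, hcases, by omega, Or.inl (by omega)⟩

/-- `x⁴ + 16x²y² - 3y⁴ = z²`, with the square in `x²` completed to avoid subtraction. -/
def IsSolution (x y z : ℕ) : Prop := z ^ 2 + 67 * y ^ 4 = (x ^ 2 + 8 * y ^ 2) ^ 2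

lemma not_isSolution_of_odd {x y z : ℕ} (hy : Odd y) : ¬ IsSolution x y z := by
  intro h
  rw [IsSolution] at h
  have hexpand : (x ^ 2 + 8 * y ^ 2) ^ 2 = x ^ 4 + 16 * (x ^ 2 * y ^ 2 + 4 * y ^ 4) := by ring
  have := pow_four_mod_sixteen_of_odd hy
  rcases sq_mod_sixteen z with _ | _ | _ | _ <;> rcases pow_four_mod_sixteen x with _ | _ <;>
    omega

lemma IsSolution.exists_pow_four {x t z : ℕ} (n : ℕ) (hx : Odd x) (hxt : Coprime x t)
    (h : IsSolution x (2 ^ (n + 1) * t) z) :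
    ∃ u v e o, t = u * v ∧ Coprime u v ∧
      (e = 67 * u ^ 4 ∧ o = v ^ 4 ∨ e = u ^ 4 ∧ o = 67 * v ^ 4) ∧
      x ^ 2 + 8 * (2 ^ (n + 1) * t) ^ 2 = 2 ^ (4 * n + 2) * e + o ∧
      (z + 2 ^ (4 * n + 2) * e = o ∨ z + o = 2 ^ (4 * n + 2) * e) := by
  rw [IsSolution] at h
  refine exists_pow_four_of_sq_add_four_mul_two_pow_mul_eq_sq (by norm_num)
    (hx.pow.add_even ((by decide : Even 8).mul_right _)) ?_ (by rw [← h]; ring)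
  rw [show 8 * (2 ^ (n + 1) * t) ^ 2 = 8 * 2 ^ (2 * n + 2) * t * t by ring,
    Nat.coprime_add_mul_right_left]
  exact hxt.pow_left 2

lemma not_isSolution_two_mul {x t z : ℕ} (hx : Odd x) (ht : Odd t) (hxt : Coprime x t) :
    ¬ IsSolution x (2 * t) z := by
  intro h
  obtain ⟨u, v, e, o, rfl, -, hcases, hC, -⟩ :=
    (h : IsSolution x (2 ^ (0 + 1) * t) z).exists_pow_four 0 hx hxt
  obtain ⟨hu, hv⟩ := Nat.odd_mul.mp ht
  have := pow_four_mod_sixteen_of_odd hu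
  have := pow_four_mod_sixteen_of_odd hv
  have h16 : 16 ∣ 8 * (2 ^ (0 + 1) * (u * v)) ^ 2 := ⟨2 * (u * v) ^ 2, by ring⟩
  rcases sq_mod_sixteen x with _ | _ | _ | _ <;> omega

lemma IsSolution.exists_sq_add_three_mul {m x t z : ℕ} (hx : Odd x) (ht : Odd t)
    (hxt : Coprime x t) (h : IsSolution x (2 ^ (m + 2) * t) z) :
    ∃ u v b, t = u * v ∧
      (b + 8 * (2 ^ (2 * m + 3) * u ^ 2) = v ^ 2 ∨ b + v ^ 2 = 8 * (2 ^ (2 * m + 3) * u ^ 2)) ∧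
      b ^ 2 + 4 * (2 ^ (4 * m + 4) * (3 * u ^ 4)) = x ^ 2 := by
  obtain ⟨u, v, e, o, rfl, -, hcases, hC, -⟩ := h.exists_pow_four (m + 1) hx hxt
  have hv : Odd v := (Nat.odd_mul.mp ht).2
  have h16C : 16 ∣ 8 * (2 ^ (m + 1 + 1) * (u * v)) ^ 2 :=
    ⟨2 ^ (2 * m) * 8 * (u * v) ^ 2, by ring⟩
  have h16e : 16 ∣ 2 ^ (4 * (m + 1) + 2) * e := ⟨2 ^ (4 * m + 2) * e, by ring⟩
  obtain ⟨rfl, rfl⟩ : e = 67 * u ^ 4 ∧ o = v ^ 4 := hcases.resolve_right fun ⟨_, ho⟩ => by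
    have := pow_four_mod_sixteen_of_odd hv
    rcases sq_mod_sixteen x with _ | _ | _ | _ <;> omega
  -- `b = |v² - 8q|` with `q = 2^(2m+3) u²`, and then `x² = b² + 3q²`.
  obtain ⟨b, hb⟩ : ∃ b, b + 8 * (2 ^ (2 * m + 3) * u ^ 2) = v ^ 2 ∨
      b + v ^ 2 = 8 * (2 ^ (2 * m + 3) * u ^ 2) := by
    rcases le_total (8 * (2 ^ (2 * m + 3) * u ^ 2)) (v ^ 2) with hle | hle
    exacts [⟨_, Or.inl (Nat.sub_add_cancel hle)⟩, ⟨_, Or.inr (Nat.sub_add_cancel hle)⟩]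
  refine ⟨u, v, b, rfl, hb, ?_⟩
  zify at hb hC ⊢
  rcases hb with hb | hb
  · linear_combination ((b : ℤ) + v ^ 2 - 8 * (2 ^ (2 * m + 3) * u ^ 2)) * hb - hC
  · linear_combination ((b : ℤ) - v ^ 2 + 8 * (2 ^ (2 * m + 3) * u ^ 2)) * hb - hC

lemma IsSolution.descent {m x t z : ℕ} (hx : Odd x) (ht : Odd t) (hxt : Coprime x t)
    (h : IsSolution x (2 ^ (m + 2) * t) z) :
    ∃ x' t' z', Odd x' ∧ Odd t' ∧ Coprime x' t' ∧ IsSolution x' (2 ^ (m + 1) * t') z' := by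
  obtain ⟨u, v, b, rfl, hb, hxb⟩ := h.exists_sq_add_three_mul hx ht hxt
  obtain ⟨u', v', e', o', rfl, huv', hcases', -, hb'⟩ :=
    exists_pow_four_of_sq_add_four_mul_two_pow_mul_eq_sq prime_three hx
      (hxt.coprime_dvd_right (dvd_mul_right _ v)) hxb
  obtain ⟨hu', hv'⟩ := Nat.odd_mul.mp (Nat.odd_mul.mp ht).1
  have h16q : 16 ∣ 8 * (2 ^ (2 * m + 3) * (u' * v') ^ 2) :=
    ⟨2 ^ (2 * m) * 4 * (u' * v') ^ 2, by ring⟩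
  have h16e' : 16 ∣ 2 ^ (4 * m + 4) * e' := ⟨2 ^ (4 * m) * e', by ring⟩
  have := pow_four_mod_sixteen_of_odd hv'
  have := sq_mod_sixteen v
  -- Modulo 16, `b ≡ ±v²` and `b ≡ ±o'`: this forces `o' = v'⁴` and equal signs.
  obtain ⟨rfl, rfl⟩ : e' = 3 * u' ^ 4 ∧ o' = v' ^ 4 :=
    hcases'.resolve_right fun ⟨_, ho'⟩ => by omega
  have hv2 : v ^ 2 + 2 ^ (4 * m + 4) * (3 * u' ^ 4) =
      v' ^ 4 + 8 * (2 ^ (2 * m + 3) * (u' * v') ^ 2) := by omega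
  refine ⟨v', u', v, hv', hu', huv'.symm, ?_⟩
  rw [IsSolution]
  linear_combination hv2

lemma not_isSolution_two_pow_succ_mul (k : ℕ) {x t z : ℕ} (hx : Odd x) (ht : Odd t)
    (hxt : Coprime x t) : ¬ IsSolution x (2 ^ (k + 1) * t) z := by
  induction k generalizing x t z with
  | zero => simpa using not_isSolution_two_mul hx ht hxt
  | succ k ih =>
    intro h
    obtain ⟨x', t', z', hx', ht', hxt', h'⟩ := h.descent hx ht hxt
    exact ih hx' ht' hxt' h'

lemma not_isSolution_of_coprime {x y z : ℕ} (hy : y ≠ 0) (hxy : Coprime x y) :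
    ¬ IsSolution x y z := by
  obtain ⟨k, t, ht, rfl⟩ := Nat.exists_eq_two_pow_mul_odd hy
  cases k with
  | zero => simpa using not_isSolution_of_odd (x := x) (z := z) ht
  | succ k =>
    have hx : Odd x := Nat.coprime_two_right.mp
      (hxy.coprime_dvd_right ((dvd_pow_self 2 k.succ_ne_zero).mul_right t))
    exact not_isSolution_two_pow_succ_mul k hx ht (hxy.coprime_dvd_right (dvd_mul_left t _))

lemma IsSolution.of_mul {d x y z : ℕ} (hd : d ≠ 0) (h : IsSolution (x * d) (y * d) z) :
    ∃ z', IsSolution x y z' := by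
  have hz : (d ^ 2) ^ 2 ∣ z ^ 2 := by
    refine (Nat.dvd_add_left (⟨67 * y ^ 4, by ring⟩ : (d ^ 2) ^ 2 ∣ 67 * (y * d) ^ 4)).mp ?_
    rw [h]
    exact ⟨(x ^ 2 + 8 * y ^ 2) ^ 2, by ring⟩
  obtain ⟨z', rfl⟩ := (Nat.pow_dvd_pow_iff two_ne_zero).mp hz
  refine ⟨z', Nat.eq_of_mul_eq_mul_left (pow_pos (Nat.pos_of_ne_zero hd) 4) ?_⟩
  rw [IsSolution] at h
  linear_combination h

lemma not_isSolution {x y z : ℕ} (hy : y ≠ 0) : ¬ IsSolution x y z := by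
  intro h
  obtain ⟨x', y', hxy', hx, hy'⟩ := Nat.exists_coprime x y
  have hd : Nat.gcd x y ≠ 0 := Nat.gcd_ne_zero_right hy
  generalize Nat.gcd x y = d at hx hy' hd
  subst hx hy'
  obtain ⟨z', h'⟩ := h.of_mul hd
  exact not_isSolution_of_coprime (left_ne_zero_of_mul hy) hxy' h'

theorem stmt9 :
    ¬ ∃ x y z : ℤ, 0 < x ∧ 0 < y ∧ 0 < z ∧
      x ^ 4 + 16 * x ^ 2 * y ^ 2 - 3 * y ^ 4 = z ^ 2 := by
  rintro ⟨x, y, z, hx, hy, hz, h⟩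
  lift x to ℕ using hx.le
  lift y to ℕ using hy.le
  lift z to ℕ using hz.le
  have : ((z ^ 2 + 67 * y ^ 4 : ℕ) : ℤ) = ((x ^ 2 + 8 * y ^ 2) ^ 2 : ℕ) := by
    push_cast
    linear_combination -h
  exact not_isSolution (y := y) (by omega) (by exact_mod_cast this)
end
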